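/- Let (φ, F) : (𝒱, 𝔟) → (𝒰, 𝔞) be a graded functor between map-graded categories and M an 𝔞-bimodule. For each n, the map (F*_M)^n : C^n_𝒰(𝔞, M) → C^n_𝒱(𝔟, F*M) defined by (F*_M)^n((ψ_{(u,A)})_{(u,A)}) = (ψ_{(φ(v), F(B))} ∘ F^{⊗n})_{(v,B)}, where (v,B) runs over the n-simplices of 𝒩(𝔟), is a well-defined k-linear map and commutes with the Hochschild differentials; hence these maps define a morphism of complexes F*_M : C_𝒰(𝔞, M) → C_𝒱(𝔟, F*M). -/

import Mathlib

/-!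
Pulling a cochain back along `F` evaluates it on the image simplex `(φ v, F B)` and the
image chain `F x`. Since `F` is `k`-linear, multilinearity transfers slot by slot; since
`F` preserves composition, it commutes with every face of the Hochschild differential,
the inner faces `xᵢ₊₁ xᵢ` being the only ones where this is not immediate. Both are
inductions on the number of remaining slots; since the two sides live over `φ` of a
composite and over a composite of images under `φ`, they are compared as heterogeneous
equalities.
-/

open CategoryTheory

universe u

namespace MapGr

variable (k : Type u) [CommRing k]

/-- A (`k`-linear) map-graded category `(𝒰, 𝔞)`: a set `𝔞_U` of objects over every
`U ∈ 𝒰`, a `k`-module `𝔞_u(B, A)` of morphisms over every `u : U ⟶ U'` in `𝒰`, together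
with associative, unital, `k`-bilinear composition maps. -/
structure GradedCat (𝒰 : Type u) [Category.{u} 𝒰] : Type (u + 1) where
  Obj : 𝒰 → Type u
  Hom : ∀ {X Y : 𝒰}, (X ⟶ Y) → Obj X → Obj Y → ModuleCat.{u} k
  comp : ∀ {X Y Z : 𝒰} {f : Y ⟶ Z} {g : X ⟶ Y} {C : Obj X} {B : Obj Y} {A : Obj Z},
    Hom f B A → Hom g C B → Hom (g ≫ f) C A
  id : ∀ {X : 𝒰} (A : Obj X), Hom (𝟙 X) A A
  comp_add_left : ∀ {X Y Z : 𝒰} {f : Y ⟶ Z} {g : X ⟶ Y} {C : Obj X} {B : Obj Y}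
    {A : Obj Z} (x x' : Hom f B A) (y : Hom g C B),
    comp (x + x') y = comp x y + comp x' y
  comp_add_right : ∀ {X Y Z : 𝒰} {f : Y ⟶ Z} {g : X ⟶ Y} {C : Obj X} {B : Obj Y}
    {A : Obj Z} (x : Hom f B A) (y y' : Hom g C B),
    comp x (y + y') = comp x y + comp x y'
  comp_smul_left : ∀ {X Y Z : 𝒰} {f : Y ⟶ Z} {g : X ⟶ Y} {C : Obj X} {B : Obj Y}
    {A : Obj Z} (r : k) (x : Hom f B A) (y : Hom g C B),
    comp (r • x) y = r • comp x y
  comp_smul_right : ∀ {X Y Z : 𝒰} {f : Y ⟶ Z} {g : X ⟶ Y} {C : Obj X} {B : Obj Y}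
    {A : Obj Z} (r : k) (x : Hom f B A) (y : Hom g C B),
    comp x (r • y) = r • comp x y
  comp_id : ∀ {X Y : 𝒰} {f : X ⟶ Y} {B : Obj X} {A : Obj Y} (x : Hom f B A),
    HEq (comp x (id B)) x
  id_comp : ∀ {X Y : 𝒰} {f : X ⟶ Y} {B : Obj X} {A : Obj Y} (x : Hom f B A),
    HEq (comp (id A) x) x
  assoc : ∀ {W X Y Z : 𝒰} {f : Y ⟶ Z} {g : X ⟶ Y} {h : W ⟶ X} {D : Obj W} {C : Obj X}
    {B : Obj Y} {A : Obj Z} (x : Hom f B A) (y : Hom g C B) (z : Hom h D C),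
    HEq (comp (comp x y) z) (comp x (comp y z))

variable {k}
variable {𝒰 : Type u} [Category.{u} 𝒰]

namespace GradedCat

variable (𝔞 : GradedCat k 𝒰)

/-- Transport of graded morphisms along an equality of underlying morphisms of `𝒰`. -/
def Hcast {X Y : 𝒰} {f g : X ⟶ Y} (h : f = g) {B : 𝔞.Obj X} {A : 𝔞.Obj Y}
    (x : 𝔞.Hom f B A) : 𝔞.Hom g B A :=
  _root_.cast (by rw [h]) x

theorem Hcast_heq {X Y : 𝒰} {f g : X ⟶ Y} (h : f = g) {B : 𝔞.Obj X} {A : 𝔞.Obj Y}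
    (x : 𝔞.Hom f B A) : HEq (𝔞.Hcast h x) x :=
  cast_heq _ _

theorem Hcast_add {X Y : 𝒰} {f g : X ⟶ Y} (h : f = g) {B : 𝔞.Obj X} {A : 𝔞.Obj Y}
    (x y : 𝔞.Hom f B A) : 𝔞.Hcast h (x + y) = 𝔞.Hcast h x + 𝔞.Hcast h y := by
  subst h; rfl

theorem Hcast_smul {X Y : 𝒰} {f g : X ⟶ Y} (h : f = g) {B : 𝔞.Obj X} {A : 𝔞.Obj Y}
    (r : k) (x : 𝔞.Hom f B A) : 𝔞.Hcast h (r • x) = r • 𝔞.Hcast h x := by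
  subst h; rfl

theorem comp_congr {X Y Z : 𝒰} {f f' : Y ⟶ Z} (hf : f = f') {g g' : X ⟶ Y} (hg : g = g')
    {C : 𝔞.Obj X} {B : 𝔞.Obj Y} {A : 𝔞.Obj Z} {x : 𝔞.Hom f B A} {x' : 𝔞.Hom f' B A}
    (hx : HEq x x') {y : 𝔞.Hom g C B} {y' : 𝔞.Hom g' C B} (hy : HEq y y') :
    HEq (𝔞.comp x y) (𝔞.comp x' y') := by
  subst hf; subst hg; rw [eq_of_heq hx, eq_of_heq hy]

end GradedCat

variable {𝒱 : Type u} [Category.{u} 𝒱]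

/-- The `𝒱`-graded category `𝔞^φ` obtained by restricting a `𝒰`-graded category `𝔞`
along a functor `φ : 𝒱 ⥤ 𝒰`:  `(𝔞^φ)_V = 𝔞_{φ V}` and `(𝔞^φ)_v(A, A') = 𝔞_{φ v}(A, A')`. -/
def GradedCat.restrict (φ : 𝒱 ⥤ 𝒰) (𝔞 : GradedCat k 𝒰) : GradedCat k 𝒱 where
  Obj V := 𝔞.Obj (φ.obj V)
  Hom f B A := 𝔞.Hom (φ.map f) B A
  comp x y := 𝔞.Hcast (φ.map_comp _ _).symm (𝔞.comp x y)
  id A := 𝔞.Hcast (φ.map_id _).symm (𝔞.id A)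
  comp_add_left x x' y := by (try dsimp only); rw [𝔞.comp_add_left, 𝔞.Hcast_add]
  comp_add_right x y y' := by (try dsimp only); rw [𝔞.comp_add_right, 𝔞.Hcast_add]
  comp_smul_left r x y := by (try dsimp only); rw [𝔞.comp_smul_left, 𝔞.Hcast_smul]
  comp_smul_right r x y := by (try dsimp only); rw [𝔞.comp_smul_right, 𝔞.Hcast_smul]
  comp_id x :=
    ((𝔞.Hcast_heq _ _).trans
      ((𝔞.comp_congr rfl (φ.map_id _) HEq.rfl (𝔞.Hcast_heq _ _)).trans (𝔞.comp_id _)))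
  id_comp x :=
    ((𝔞.Hcast_heq _ _).trans
      ((𝔞.comp_congr (φ.map_id _) rfl (𝔞.Hcast_heq _ _) HEq.rfl).trans (𝔞.id_comp _)))
  assoc x y z := by
    refine ((𝔞.Hcast_heq _ _).trans ?_).trans (𝔞.Hcast_heq _ _).symm
    refine ((𝔞.comp_congr (φ.map_comp _ _) rfl (𝔞.Hcast_heq _ _) HEq.rfl).trans
      (𝔞.assoc _ _ _)).trans ?_
    exact 𝔞.comp_congr rfl (φ.map_comp _ _).symm HEq.rfl (𝔞.Hcast_heq _ _).symm

variable (k)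

/-- A graded functor `(φ, F) : (𝒱, 𝔟) → (𝒰, 𝔞)` over a functor `φ : 𝒱 ⥤ 𝒰`: maps
`F_V : 𝔟_V → 𝔞_{φ V}` on objects and `k`-linear maps `𝔟_v(B, B') → 𝔞_{φ v}(F B, F B')`
on graded morphisms, preserving composition and identities. -/
structure GradedFunctor (φ : 𝒱 ⥤ 𝒰) (𝔟 : GradedCat k 𝒱) (𝔞 : GradedCat k 𝒰) :
    Type u where
  obj : ∀ {V : 𝒱}, 𝔟.Obj V → 𝔞.Obj (φ.obj V)
  map : ∀ {V V' : 𝒱} (f : V ⟶ V') {B : 𝔟.Obj V} {B' : 𝔟.Obj V'},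
    𝔟.Hom f B B' → 𝔞.Hom (φ.map f) (obj B) (obj B')
  map_add : ∀ {V V' : 𝒱} (f : V ⟶ V') {B : 𝔟.Obj V} {B' : 𝔟.Obj V'}
    (x y : 𝔟.Hom f B B'), map f (x + y) = map f x + map f y
  map_smul : ∀ {V V' : 𝒱} (f : V ⟶ V') {B : 𝔟.Obj V} {B' : 𝔟.Obj V'} (r : k)
    (x : 𝔟.Hom f B B'), map f (r • x) = r • map f x
  map_id : ∀ {V : 𝒱} (B : 𝔟.Obj V), HEq (map (𝟙 V) (𝔟.id B)) (𝔞.id (obj B))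
  map_comp : ∀ {V V' V'' : 𝒱} {f : V' ⟶ V''} {g : V ⟶ V'} {C : 𝔟.Obj V} {B : 𝔟.Obj V'}
    {A : 𝔟.Obj V''} (x : 𝔟.Hom f B A) (y : 𝔟.Hom g C B),
    HEq (map (g ≫ f) (𝔟.comp x y)) (𝔞.comp (map f x) (map g y))

variable {k}

namespace GradedFunctor

variable {φ : 𝒱 ⥤ 𝒰} {𝔟 : GradedCat k 𝒱} {𝔞 : GradedCat k 𝒰}

theorem map_congr (F : GradedFunctor k φ 𝔟 𝔞) {V V' : 𝒱} {f g : V ⟶ V'} (hfg : f = g)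
    {B : 𝔟.Obj V} {B' : 𝔟.Obj V'} {x : 𝔟.Hom f B B'} {y : 𝔟.Hom g B B'} (h : HEq x y) :
    HEq (F.map f x) (F.map g y) := by
  subst hfg; rw [eq_of_heq h]

/-- A graded functor is subcartesian (cartesian with respect to `Map → Mas`) iff all its
maps between graded `Hom`-modules are bijective. -/
def Subcartesian (F : GradedFunctor k φ 𝔟 𝔞) : Prop :=
  ∀ {V V' : 𝒱} (f : V ⟶ V') (B : 𝔟.Obj V) (B' : 𝔟.Obj V'),
    Function.Bijective (fun x : 𝔟.Hom f B B' => F.map f x)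

variable {𝒲 : Type u} [Category.{u} 𝒲] {ψ : 𝒲 ⥤ 𝒱} {𝔠 : GradedCat k 𝒲}

/-- Composition of graded functors. -/
def comp (F : GradedFunctor k φ 𝔟 𝔞) (G : GradedFunctor k ψ 𝔠 𝔟) :
    GradedFunctor k (ψ ⋙ φ) 𝔠 𝔞 where
  obj C := F.obj (G.obj C)
  map := fun {V V'} f {B B'} x => F.map (ψ.map f) (G.map f x)
  map_add := by intro V V' f B B' x y; (try dsimp only); rw [G.map_add, F.map_add]
  map_smul := by intro V V' f B B' r x; (try dsimp only); rw [G.map_smul, F.map_smul]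
  map_id B := (F.map_congr (ψ.map_id _) (G.map_id _)).trans (F.map_id _)
  map_comp x y := (F.map_congr (ψ.map_comp _ _) (G.map_comp _ _)).trans (F.map_comp _ _)

end GradedFunctor

/-- The canonical cartesian graded functor `δ^{φ,𝔞} : (𝒱, 𝔞^φ) → (𝒰, 𝔞)`. -/
def restrictProj (φ : 𝒱 ⥤ 𝒰) (𝔞 : GradedCat k 𝒰) :
    GradedFunctor k φ (𝔞.restrict φ) 𝔞 where
  obj A := A
  map := fun {V V'} _f {B B'} x => x
  map_add := by intros; rfl
  map_smul := by intros; rfl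
  map_id B := 𝔞.Hcast_heq (φ.map_id _).symm (𝔞.id B)
  map_comp x y := 𝔞.Hcast_heq (φ.map_comp _ _).symm (𝔞.comp x y)

theorem restrictProj_subcartesian (φ : 𝒱 ⥤ 𝒰) (𝔞 : GradedCat k 𝒰) :
    (restrictProj φ 𝔞).Subcartesian := by
  intro V V' f B B'
  constructor
  · intro a b h
    exact h
  · intro y
    exact ⟨y, rfl⟩

end MapGr

namespace MapGr

variable {k : Type u} [CommRing k]
variable {𝒰 : Type u} [Category.{u} 𝒰]

/-- The category `𝒰^♯` associated to a `𝒰`-graded category `𝔞`: objects are pairs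
`(U, A)` with `A ∈ 𝔞_U`, and morphisms `(U, A) → (U', A')` are the morphisms `U ⟶ U'`
of `𝒰`. -/
def Sh (𝔞 : GradedCat k 𝒰) : Type u := Σ X : 𝒰, 𝔞.Obj X

instance (𝔞 : GradedCat k 𝒰) : Category.{u} (Sh 𝔞) where
  Hom A B := A.1 ⟶ B.1
  id A := 𝟙 A.1
  comp f g := f ≫ g
  id_comp := by intros; simp
  comp_id := by intros; simp
  assoc := by intros; simp

/-- The underlying morphism of `𝒰` of a morphism of `𝒰^♯`. -/
def Sh.base {𝔞 : GradedCat k 𝒰} {A B : Sh 𝔞} (f : A ⟶ B) : A.1 ⟶ B.1 := f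

@[simp] theorem Sh.base_id {𝔞 : GradedCat k 𝒰} (A : Sh 𝔞) :
    Sh.base (𝟙 A) = 𝟙 A.1 := rfl

@[simp] theorem Sh.base_comp {𝔞 : GradedCat k 𝒰} {A B C : Sh 𝔞} (f : A ⟶ B) (g : B ⟶ C) :
    Sh.base (f ≫ g) = Sh.base f ≫ Sh.base g := rfl

/-- `n`-simplices of the simplicial nerve of a category with specified endpoints:
strings `X = X₀ → X₁ → ⋯ → Xₙ = Y` of `n` composable morphisms. -/
inductive Pth (C : Type u) [Category.{u} C] : ℕ → C → C → Type u
  | nil (X : C) : Pth C 0 X X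
  | cons {n : ℕ} {X Y Z : C} (f : X ⟶ Y) (p : Pth C n Y Z) : Pth C (n + 1) X Z

/-- The composite `|u| = uₙ₋₁ ⋯ u₁ u₀` of a string of composable morphisms. -/
def Pth.comp {C : Type u} [Category.{u} C] : ∀ {n : ℕ} {X Y : C}, Pth C n X Y → (X ⟶ Y)
  | _, _, _, .nil X => 𝟙 X
  | _, _, _, .cons f p => f ≫ p.comp

@[simp] theorem Pth.comp_nil {C : Type u} [Category.{u} C] (X : C) :
    (Pth.nil X).comp = 𝟙 X := rfl

@[simp] theorem Pth.comp_cons {C : Type u} [Category.{u} C] {n : ℕ} {X Y Z : C}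
    (f : X ⟶ Y) (p : Pth C n Y Z) : (Pth.cons f p).comp = f ≫ p.comp := rfl

/-- The map induced by a functor on simplices of the nerves. -/
def Pth.map {C D : Type u} [Category.{u} C] [Category.{u} D] (F : C ⥤ D) :
    ∀ {n : ℕ} {X Y : C}, Pth C n X Y → Pth D n (F.obj X) (F.obj Y)
  | _, _, _, .nil X => .nil _
  | _, _, _, .cons f p => .cons (F.map f) (p.map F)

theorem Pth.comp_map {C D : Type u} [Category.{u} C] [Category.{u} D] (F : C ⥤ D)
    {n : ℕ} {X Y : C} (p : Pth C n X Y) : (p.map F).comp = F.map p.comp := by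
  induction p with
  | nil => simp [Pth.map]
  | cons f p ih => simp [Pth.map, ih]

/-- The set of `n`-simplices of the nerve `𝒩(𝔞) = 𝒩(𝒰^♯)` of a graded category. -/
def NerveTot (C : Type u) [Category.{u} C] (m : ℕ) : Type u :=
  Σ (X : C) (Y : C), Pth C m X Y

/-- The map induced by a functor on the set of `n`-simplices of the nerves. -/
def NerveTot.map {C D : Type u} [Category.{u} C] [Category.{u} D] (F : C ⥤ D) {m : ℕ}
    (s : NerveTot C m) : NerveTot D m :=
  ⟨F.obj s.1, F.obj s.2.1, Pth.map F s.2.2⟩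

/-- A family of elements of the graded `Hom`-modules of `𝔞` lying over a simplex of the
nerve of `𝔞`. -/
inductive PthElts {k : Type u} [CommRing k] {𝒰 : Type u} [Category.{u} 𝒰]
    (𝔞 : GradedCat k 𝒰) : ∀ {n : ℕ} {X Y : Sh 𝔞}, Pth (Sh 𝔞) n X Y → Type u
  | nil (X : Sh 𝔞) : PthElts 𝔞 (Pth.nil X)
  | cons {n : ℕ} {X Y Z : Sh 𝔞} {f : X ⟶ Y} {p : Pth (Sh 𝔞) n Y Z}
      (x : 𝔞.Hom (Sh.base f) X.2 Y.2) (e : PthElts 𝔞 p) : PthElts 𝔞 (Pth.cons f p)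

variable (k)

/-- An `𝔞`-bimodule `M`: `k`-modules `M_u(B, A)` together with associative, unital,
`k`-bilinear left and right actions of `𝔞`. -/
structure Bimod {𝒰 : Type u} [Category.{u} 𝒰] (𝔞 : GradedCat k 𝒰) : Type (u + 1) where
  M : ∀ {X Y : 𝒰}, (X ⟶ Y) → 𝔞.Obj X → 𝔞.Obj Y → ModuleCat.{u} k
  actL : ∀ {X Y Z : 𝒰} {f : Y ⟶ Z} {g : X ⟶ Y} {B : 𝔞.Obj X} {A : 𝔞.Obj Y}
    {A' : 𝔞.Obj Z}, 𝔞.Hom f A A' → M g B A → M (g ≫ f) B A'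
  actR : ∀ {X Y Z : 𝒰} {f : Y ⟶ Z} {g : X ⟶ Y} {B' : 𝔞.Obj X} {B : 𝔞.Obj Y}
    {A : 𝔞.Obj Z}, M f B A → 𝔞.Hom g B' B → M (g ≫ f) B' A
  actL_add_left : ∀ {X Y Z : 𝒰} {f : Y ⟶ Z} {g : X ⟶ Y} {B : 𝔞.Obj X} {A : 𝔞.Obj Y}
    {A' : 𝔞.Obj Z} (x x' : 𝔞.Hom f A A') (m : M g B A),
    actL (x + x') m = actL x m + actL x' m
  actL_add_right : ∀ {X Y Z : 𝒰} {f : Y ⟶ Z} {g : X ⟶ Y} {B : 𝔞.Obj X} {A : 𝔞.Obj Y}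
    {A' : 𝔞.Obj Z} (x : 𝔞.Hom f A A') (m m' : M g B A),
    actL x (m + m') = actL x m + actL x m'
  actL_smul_left : ∀ {X Y Z : 𝒰} {f : Y ⟶ Z} {g : X ⟶ Y} {B : 𝔞.Obj X} {A : 𝔞.Obj Y}
    {A' : 𝔞.Obj Z} (r : k) (x : 𝔞.Hom f A A') (m : M g B A),
    actL (r • x) m = r • actL x m
  actL_smul_right : ∀ {X Y Z : 𝒰} {f : Y ⟶ Z} {g : X ⟶ Y} {B : 𝔞.Obj X} {A : 𝔞.Obj Y}
    {A' : 𝔞.Obj Z} (r : k) (x : 𝔞.Hom f A A') (m : M g B A),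
    actL x (r • m) = r • actL x m
  actR_add_left : ∀ {X Y Z : 𝒰} {f : Y ⟶ Z} {g : X ⟶ Y} {B' : 𝔞.Obj X} {B : 𝔞.Obj Y}
    {A : 𝔞.Obj Z} (m m' : M f B A) (y : 𝔞.Hom g B' B),
    actR (m + m') y = actR m y + actR m' y
  actR_add_right : ∀ {X Y Z : 𝒰} {f : Y ⟶ Z} {g : X ⟶ Y} {B' : 𝔞.Obj X} {B : 𝔞.Obj Y}
    {A : 𝔞.Obj Z} (m : M f B A) (y y' : 𝔞.Hom g B' B),
    actR m (y + y') = actR m y + actR m y'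
  actR_smul_left : ∀ {X Y Z : 𝒰} {f : Y ⟶ Z} {g : X ⟶ Y} {B' : 𝔞.Obj X} {B : 𝔞.Obj Y}
    {A : 𝔞.Obj Z} (r : k) (m : M f B A) (y : 𝔞.Hom g B' B),
    actR (r • m) y = r • actR m y
  actR_smul_right : ∀ {X Y Z : 𝒰} {f : Y ⟶ Z} {g : X ⟶ Y} {B' : 𝔞.Obj X} {B : 𝔞.Obj Y}
    {A : 𝔞.Obj Z} (r : k) (m : M f B A) (y : 𝔞.Hom g B' B),
    actR m (r • y) = r • actR m y
  actL_id : ∀ {X Y : 𝒰} {g : X ⟶ Y} {B : 𝔞.Obj X} {A : 𝔞.Obj Y} (m : M g B A),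
    HEq (actL (𝔞.id A) m) m
  actR_id : ∀ {X Y : 𝒰} {f : X ⟶ Y} {B : 𝔞.Obj X} {A : 𝔞.Obj Y} (m : M f B A),
    HEq (actR m (𝔞.id B)) m
  actL_actL : ∀ {W X Y Z : 𝒰} {f' : Y ⟶ Z} {f : X ⟶ Y} {g : W ⟶ X} {B : 𝔞.Obj W}
    {A : 𝔞.Obj X} {A' : 𝔞.Obj Y} {A'' : 𝔞.Obj Z} (x : 𝔞.Hom f' A' A'')
    (y : 𝔞.Hom f A A') (m : M g B A),
    HEq (actL x (actL y m)) (actL (𝔞.comp x y) m)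
  actR_actR : ∀ {W X Y Z : 𝒰} {f : Y ⟶ Z} {g : X ⟶ Y} {h : W ⟶ X} {B'' : 𝔞.Obj W}
    {B' : 𝔞.Obj X} {B : 𝔞.Obj Y} {A : 𝔞.Obj Z} (m : M f B A) (y : 𝔞.Hom g B' B)
    (y' : 𝔞.Hom h B'' B'),
    HEq (actR (actR m y) y') (actR m (𝔞.comp y y'))
  actL_actR : ∀ {W X Y Z : 𝒰} {f : Y ⟶ Z} {g : X ⟶ Y} {h : W ⟶ X} {B' : 𝔞.Obj W}
    {B : 𝔞.Obj X} {A : 𝔞.Obj Y} {A' : 𝔞.Obj Z} (x : 𝔞.Hom f A A') (m : M g B A)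
    (y : 𝔞.Hom h B' B),
    HEq (actL x (actR m y)) (actR (actL x m) y)

variable {k}

namespace Bimod

variable {𝔞 : GradedCat k 𝒰} (M : Bimod k 𝔞)

/-- Transport of bimodule elements along an equality of underlying morphisms of `𝒰`. -/
def cst {X Y : 𝒰} {f g : X ⟶ Y} (h : f = g) {B : 𝔞.Obj X} {A : 𝔞.Obj Y}
    (m : M.M f B A) : M.M g B A :=
  _root_.cast (by rw [h]) m

theorem cst_heq {X Y : 𝒰} {f g : X ⟶ Y} (h : f = g) {B : 𝔞.Obj X} {A : 𝔞.Obj Y}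
    (m : M.M f B A) : HEq (M.cst h m) m :=
  cast_heq _ _

theorem cst_add {X Y : 𝒰} {f g : X ⟶ Y} (h : f = g) {B : 𝔞.Obj X} {A : 𝔞.Obj Y}
    (m m' : M.M f B A) : M.cst h (m + m') = M.cst h m + M.cst h m' := by
  subst h; rfl

theorem cst_smul {X Y : 𝒰} {f g : X ⟶ Y} (h : f = g) {B : 𝔞.Obj X} {A : 𝔞.Obj Y}
    (r : k) (m : M.M f B A) : M.cst h (r • m) = r • M.cst h m := by
  subst h; rfl

theorem actL_congr {X Y Z : 𝒰} {f f' : Y ⟶ Z} (hf : f = f') {g g' : X ⟶ Y}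
    (hg : g = g') {B : 𝔞.Obj X} {A : 𝔞.Obj Y} {A' : 𝔞.Obj Z} {x : 𝔞.Hom f A A'}
    {x' : 𝔞.Hom f' A A'} (hx : HEq x x') {m : M.M g B A} {m' : M.M g' B A}
    (hm : HEq m m') : HEq (M.actL x m) (M.actL x' m') := by
  subst hf; subst hg; rw [eq_of_heq hx, eq_of_heq hm]

theorem actR_congr {X Y Z : 𝒰} {f f' : Y ⟶ Z} (hf : f = f') {g g' : X ⟶ Y}
    (hg : g = g') {B' : 𝔞.Obj X} {B : 𝔞.Obj Y} {A : 𝔞.Obj Z} {m : M.M f B A}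
    {m' : M.M f' B A} (hm : HEq m m') {y : 𝔞.Hom g B' B} {y' : 𝔞.Hom g' B' B}
    (hy : HEq y y') : HEq (M.actR m y) (M.actR m' y') := by
  subst hf; subst hg; rw [eq_of_heq hm, eq_of_heq hy]

end Bimod

/-- The identity bimodule `1_𝔞`. -/
def GradedCat.unit (𝔞 : GradedCat k 𝒰) : Bimod k 𝔞 where
  M := 𝔞.Hom
  actL := 𝔞.comp
  actR := 𝔞.comp
  actL_add_left := 𝔞.comp_add_left
  actL_add_right := 𝔞.comp_add_right
  actL_smul_left := 𝔞.comp_smul_left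
  actL_smul_right := 𝔞.comp_smul_right
  actR_add_left := 𝔞.comp_add_left
  actR_add_right := 𝔞.comp_add_right
  actR_smul_left := 𝔞.comp_smul_left
  actR_smul_right := 𝔞.comp_smul_right
  actL_id := 𝔞.id_comp
  actR_id := 𝔞.comp_id
  actL_actL x y m := (𝔞.assoc x y m).symm
  actR_actR m y y' := 𝔞.assoc m y y'
  actL_actR x m y := (𝔞.assoc x m y).symm

variable {𝒱 : Type u} [Category.{u} 𝒱]

/-- The pullback `F*M` of an `𝔞`-bimodule along a graded functor
`(φ, F) : (𝒱, 𝔟) → (𝒰, 𝔞)`: `(F*M)_v(B, B') = M_{φ v}(F B, F B')`. -/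
def Bimod.pullback {φ : 𝒱 ⥤ 𝒰} {𝔟 : GradedCat k 𝒱} {𝔞 : GradedCat k 𝒰}
    (F : GradedFunctor k φ 𝔟 𝔞) (M : Bimod k 𝔞) : Bimod k 𝔟 where
  M f B B' := M.M (φ.map f) (F.obj B) (F.obj B')
  actL := fun {X Y Z f g B A A'} x m =>
    M.cst (φ.map_comp g f).symm (M.actL (F.map f x) m)
  actR := fun {X Y Z f g B' B A} m y =>
    M.cst (φ.map_comp g f).symm (M.actR m (F.map g y))
  actL_add_left := by
    intros; (try dsimp only); rw [F.map_add, M.actL_add_left, M.cst_add]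
  actL_add_right := by
    intros; (try dsimp only); rw [M.actL_add_right, M.cst_add]
  actL_smul_left := by
    intros; (try dsimp only); rw [F.map_smul, M.actL_smul_left, M.cst_smul]
  actL_smul_right := by
    intros; (try dsimp only); rw [M.actL_smul_right, M.cst_smul]
  actR_add_left := by
    intros; (try dsimp only); rw [M.actR_add_left, M.cst_add]
  actR_add_right := by
    intros; (try dsimp only); rw [F.map_add, M.actR_add_right, M.cst_add]
  actR_smul_left := by
    intros; (try dsimp only); rw [M.actR_smul_left, M.cst_smul]
  actR_smul_right := by
    intros; (try dsimp only); rw [F.map_smul, M.actR_smul_right, M.cst_smul]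
  actL_id := by
    intro X Y g B A m; (try dsimp only)
    exact (M.cst_heq _ _).trans
      ((M.actL_congr (φ.map_id _) rfl (F.map_id _) HEq.rfl).trans (M.actL_id m))
  actR_id := by
    intro X Y f B A m; (try dsimp only)
    exact (M.cst_heq _ _).trans
      ((M.actR_congr rfl (φ.map_id _) HEq.rfl (F.map_id _)).trans (M.actR_id m))
  actL_actL := by
    intro W X Y Z f' f g B A A' A'' x y m; (try dsimp only)
    refine ((M.cst_heq _ _).trans ?_).trans (M.cst_heq _ _).symm
    refine ((M.actL_congr rfl (φ.map_comp _ _) HEq.rfl (M.cst_heq _ _)).trans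
      (M.actL_actL _ _ _)).trans ?_
    exact M.actL_congr (φ.map_comp _ _).symm rfl (F.map_comp _ _).symm HEq.rfl
  actR_actR := by
    intro W X Y Z f g h B'' B' B A m y y'; (try dsimp only)
    refine ((M.cst_heq _ _).trans ?_).trans (M.cst_heq _ _).symm
    refine ((M.actR_congr (φ.map_comp _ _) rfl (M.cst_heq _ _) HEq.rfl).trans
      (M.actR_actR _ _ _)).trans ?_
    exact M.actR_congr rfl (φ.map_comp _ _).symm HEq.rfl (F.map_comp _ _).symm
  actL_actR := by
    intro W X Y Z f g h B' B A A' x m y; (try dsimp only)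
    refine ((M.cst_heq _ _).trans ?_).trans (M.cst_heq _ _).symm
    refine ((M.actL_congr rfl (φ.map_comp _ _) HEq.rfl (M.cst_heq _ _)).trans
      (M.actL_actR _ _ _)).trans ?_
    exact M.actR_congr (φ.map_comp _ _).symm rfl (M.cst_heq _ _).symm HEq.rfl

/-- The functor `𝒱^♯ ⥤ 𝒰^♯` induced by a graded functor. -/
def sharpF {φ : 𝒱 ⥤ 𝒰} {𝔟 : GradedCat k 𝒱} {𝔞 : GradedCat k 𝒰}
    (F : GradedFunctor k φ 𝔟 𝔞) : Sh 𝔟 ⥤ Sh 𝔞 where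
  obj X := ⟨φ.obj X.1, F.obj X.2⟩
  map {X Y} f := φ.map (Sh.base f)
  map_id X := φ.map_id X.1
  map_comp f g := φ.map_comp _ _

/-- The map induced by a graded functor on families of elements over simplices. -/
def eltsMap {φ : 𝒱 ⥤ 𝒰} {𝔟 : GradedCat k 𝒱} {𝔞 : GradedCat k 𝒰}
    (F : GradedFunctor k φ 𝔟 𝔞) :
    ∀ {n : ℕ} {X Y : Sh 𝔟} {p : Pth (Sh 𝔟) n X Y},
      PthElts 𝔟 p → PthElts 𝔞 (p.map (sharpF F))
  | _, _, _, _, .nil X => .nil _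
  | _, _, _, _, .cons x e => .cons (F.map _ x) (eltsMap F e)

/-- The module of raw Hochschild `n`-cochains of `(𝒰, 𝔞)` with values in an
`𝔞`-bimodule `M`: families, indexed by the `n`-simplices `(u, A)` of `𝒩(𝔞)`, of maps
`𝔞_{u_{n-1}} ⊗ ⋯ ⊗ 𝔞_{u_0} → M_{|u|}(A₀, Aₙ)` (multilinearity is the separate
predicate `IsCochain`). -/
abbrev RawCochain {𝔞 : GradedCat k 𝒰} (M : Bimod k 𝔞) (n : ℕ) : Type u :=
  ∀ (X Y : Sh 𝔞) (p : Pth (Sh 𝔞) n X Y), PthElts 𝔞 p → M.M (Sh.base p.comp) X.2 Y.2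

/-- Restriction of Hochschild cochains along a graded functor, with values in the
pullback bimodule: `(F*ψ)_{(v,B)} = ψ_{(φ v, F B)} ∘ F^{⊗n}`. -/
def Fstar {φ : 𝒱 ⥤ 𝒰} {𝔟 : GradedCat k 𝒱} {𝔞 : GradedCat k 𝒰}
    (F : GradedFunctor k φ 𝔟 𝔞) (M : Bimod k 𝔞) {n : ℕ} (c : RawCochain M n) :
    RawCochain (Bimod.pullback F M) n :=
  fun X Y p e =>
    M.cst (by rw [Pth.comp_map]; rfl) (c _ _ (p.map (sharpF F)) (eltsMap F e))

/-- Restriction of Hochschild cochains (with values in the identity bimodules) along a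
subcartesian graded functor: `(F*ψ)_{(v,B)} = F⁻¹ ∘ ψ_{(φ v, F B)} ∘ F^{⊗n}`. -/
noncomputable def FstarUnit {φ : 𝒱 ⥤ 𝒰} {𝔟 : GradedCat k 𝒱} {𝔞 : GradedCat k 𝒰}
    (F : GradedFunctor k φ 𝔟 𝔞) (hF : F.Subcartesian) {n : ℕ}
    (c : RawCochain 𝔞.unit n) : RawCochain 𝔟.unit n :=
  fun X Y p e =>
    (Equiv.ofBijective _ (hF (Sh.base p.comp) X.2 Y.2)).symm
      ((𝔞.unit).cst (by rw [Pth.comp_map]; rfl) (c _ _ (p.map (sharpF F)) (eltsMap F e)))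

section Multilinear

variable {𝔞 : GradedCat k 𝒰} (M : Bimod k 𝔞)

/-- The multilinearity predicate for (relative) Hochschild cochains: additivity and
`k`-homogeneity in the first slot, and, recursively, multilinearity of all partial
evaluations. -/
def IsML : ∀ {n : ℕ} {W : 𝒰} {B : 𝔞.Obj W} {Y : Sh 𝔞} {v : W ⟶ Y.1},
    (∀ (Z : Sh 𝔞) (q : Pth (Sh 𝔞) n Y Z), PthElts 𝔞 q →
      M.M (v ≫ Sh.base q.comp) B Z.2) → Prop
  | 0, _, _, _, _, _ => True
  | n + 1, W, B, Y, v, c =>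
      (∀ (Y' Z : Sh 𝔞) (a : Y ⟶ Y') (q : Pth (Sh 𝔞) n Y' Z) (e : PthElts 𝔞 q)
        (x x' : 𝔞.Hom (Sh.base a) Y.2 Y'.2),
        c Z (.cons a q) (.cons (x + x') e) =
          c Z (.cons a q) (.cons x e) + c Z (.cons a q) (.cons x' e)) ∧
      (∀ (Y' Z : Sh 𝔞) (a : Y ⟶ Y') (q : Pth (Sh 𝔞) n Y' Z) (e : PthElts 𝔞 q) (r : k)
        (x : 𝔞.Hom (Sh.base a) Y.2 Y'.2),
        c Z (.cons a q) (.cons (r • x) e) = r • c Z (.cons a q) (.cons x e)) ∧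
      (∀ (Y' : Sh 𝔞) (a : Y ⟶ Y') (x : 𝔞.Hom (Sh.base a) Y.2 Y'.2),
        IsML (v := v ≫ Sh.base a)
          (fun Z q e => M.cst (by simp) (c Z (.cons a q) (.cons x e))))

/-- A raw cochain, viewed as a relative cochain. -/
def toRel {n : ℕ} (c : RawCochain M n) (X : Sh 𝔞) :
    ∀ (Z : Sh 𝔞) (q : Pth (Sh 𝔞) n X Z), PthElts 𝔞 q →
      M.M (𝟙 X.1 ≫ Sh.base q.comp) X.2 Z.2 :=
  fun Z q e => M.cst (by simp) (c X Z q e)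

/-- A raw cochain is a genuine Hochschild cochain if it is multilinear. -/
def IsCochain {n : ℕ} (c : RawCochain M n) : Prop :=
  ∀ X : Sh 𝔞, IsML M (toRel M c X)

end Multilinear

section Differential

variable {𝔞 : GradedCat k 𝒰}

/-- The inductive core of the Hochschild differential: `χ` is the relative cochain with
the already-consumed prefix applied, and `G` records the evaluation with the last
morphism of the prefix composed into the first remaining slot (initially, the right
action on the source). -/
def hochD (M : Bimod k 𝔞) {W : 𝒰} (B : 𝔞.Obj W) :
    ∀ {m : ℕ} {Y Z : Sh 𝔞} (v : W ⟶ Y.1)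
      (χ : ∀ (Z' : Sh 𝔞) (q : Pth (Sh 𝔞) m Y Z'), PthElts 𝔞 q →
        M.M (v ≫ Sh.base q.comp) B Z'.2)
      (G : ∀ (Y' Z' : Sh 𝔞) (c : Y ⟶ Y') (z : 𝔞.Hom (Sh.base c) Y.2 Y'.2)
        (q : Pth (Sh 𝔞) m Y' Z'), PthElts 𝔞 q →
        M.M (v ≫ (Sh.base c ≫ Sh.base q.comp)) B Z'.2)
      (p : Pth (Sh 𝔞) (m + 1) Y Z) (e : PthElts 𝔞 p),
      M.M (v ≫ Sh.base p.comp) B Z.2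
  | 0, Y, Z, v, χ, G, .cons a (.nil _), .cons x e' =>
      G _ _ a x (.nil _) e' - M.cst (by simp) (M.actL x (χ _ (.nil _) (.nil _)))
  | m + 1, Y, Z, v, χ, G, .cons a q, .cons x e' =>
      G _ _ a x q e' -
        M.cst (by simp)
          (hochD M B (v ≫ Sh.base a)
            (fun Z' r er => M.cst (by simp) (χ Z' (.cons a r) (.cons x er)))
            (fun Y'' Z' c z r er =>
              M.cst (by simp) (χ Z' (.cons (a ≫ c) r) (.cons (𝔞.comp z x) er)))
            q e')

/-- The simplicial Hochschild differential on raw cochains. -/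
def dRaw (M : Bimod k 𝔞) {n : ℕ} (c : RawCochain M n) : RawCochain M (n + 1) :=
  fun X Z p e =>
    M.cst (by simp)
      (hochD M X.2 (𝟙 X.1)
        (fun Z' q eq => M.cst (by simp) (c X Z' q eq))
        (fun Y' Z' a z q eq => M.cst (by simp) (M.actR (c Y' Z' q eq) z))
        p e)

end Differential

end MapGr

namespace MapGr

variable {k : Type u} [CommRing k] {𝒱 𝒰 : Type u} [Category.{u} 𝒱] [Category.{u} 𝒰]

namespace Bimod

variable {𝔞 : GradedCat k 𝒰} (M : Bimod k 𝔞) {X Y : 𝒰} {f g : X ⟶ Y} {B : 𝔞.Obj X}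
  {A : 𝔞.Obj Y}

theorem add_heq (h : f = g) {a b : M.M f B A} {a' b' : M.M g B A} (ha : HEq a a')
    (hb : HEq b b') : HEq (a + b) (a' + b') := by
  subst h; rw [eq_of_heq ha, eq_of_heq hb]

theorem sub_heq (h : f = g) {a b : M.M f B A} {a' b' : M.M g B A} (ha : HEq a a')
    (hb : HEq b b') : HEq (a - b) (a' - b') := by
  subst h; rw [eq_of_heq ha, eq_of_heq hb]

theorem smul_heq (h : f = g) (r : k) {a : M.M f B A} {a' : M.M g B A} (ha : HEq a a') :
    HEq (r • a) (r • a') := by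
  subst h; rw [eq_of_heq ha]

end Bimod

theorem PthElts.cons_heq {𝔞 : GradedCat k 𝒰} {n : ℕ} {X Y Z : Sh 𝔞} {f f' : X ⟶ Y}
    (h : f = f') {x : 𝔞.Hom (Sh.base f) X.2 Y.2} {x' : 𝔞.Hom (Sh.base f') X.2 Y.2}
    (hx : HEq x x') {p : Pth (Sh 𝔞) n Y Z} (e : PthElts 𝔞 p) :
    HEq (PthElts.cons (f := f) x e) (PthElts.cons (f := f') x' e) := by
  subst h; rw [eq_of_heq hx]

/-- The partially evaluated cochains on which `IsML` and `hochD` recurse: the prefix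
`v` of the simplex has already been consumed. -/
abbrev RelCochain {𝔞 : GradedCat k 𝒰} (M : Bimod k 𝔞) (n : ℕ) {W : 𝒰} (B : 𝔞.Obj W)
    (Y : Sh 𝔞) (v : W ⟶ Y.1) : Type u :=
  ∀ (Z : Sh 𝔞) (q : Pth (Sh 𝔞) n Y Z), PthElts 𝔞 q → M.M (v ≫ Sh.base q.comp) B Z.2

theorem RelCochain.congr_heq {𝔞 : GradedCat k 𝒰} {M : Bimod k 𝔞} {n : ℕ} {W : 𝒰}
    {B : 𝔞.Obj W} {Y : Sh 𝔞} {v : W ⟶ Y.1} (χ : RelCochain M n B Y v) {Z : Sh 𝔞}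
    {q q' : Pth (Sh 𝔞) n Y Z} (hq : q = q') {e : PthElts 𝔞 q} {e' : PthElts 𝔞 q'}
    (he : HEq e e') : HEq (χ Z q e) (χ Z q' e') := by
  subst hq; rw [eq_of_heq he]

section Pullback

variable {φ : 𝒱 ⥤ 𝒰} {𝔟 : GradedCat k 𝒱} {𝔞 : GradedCat k 𝒰}
  (F : GradedFunctor k φ 𝔟 𝔞) (M : Bimod k 𝔞)

theorem base_comp_map_sharpF {n : ℕ} {X Y : Sh 𝔟} (p : Pth (Sh 𝔟) n X Y) :
    Sh.base (p.map (sharpF F)).comp = φ.map (Sh.base p.comp) :=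
  Pth.comp_map _ p

theorem comp_base_comp_map_sharpF {n : ℕ} {W : 𝒱} {Y Z : Sh 𝔟} {v : W ⟶ Y.1}
    {v' : φ.obj W ⟶ φ.obj Y.1} (hv : v' = φ.map v) (p : Pth (Sh 𝔟) n Y Z) :
    v' ≫ Sh.base (p.map (sharpF F)).comp = φ.map (v ≫ Sh.base p.comp) := by
  rw [hv, base_comp_map_sharpF]
  exact (φ.map_comp _ _).symm

def IsRestriction {n : ℕ} {W : 𝒱} {B : 𝔟.Obj W} {Y : Sh 𝔟} {v : W ⟶ Y.1}
    {v' : φ.obj W ⟶ φ.obj Y.1} (χ : RelCochain (Bimod.pullback F M) n B Y v)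
    (χ' : RelCochain M n (F.obj B) ((sharpF F).obj Y) v') : Prop :=
  ∀ Z q e, HEq (χ Z q e) (χ' ((sharpF F).obj Z) (q.map (sharpF F)) (eltsMap F e))

theorem isML_pullback : ∀ {n : ℕ} {W : 𝒱} {B : 𝔟.Obj W} {Y : Sh 𝔟} {v : W ⟶ Y.1}
    {v' : φ.obj W ⟶ φ.obj Y.1} (_ : v' = φ.map v)
    {χ : RelCochain (Bimod.pullback F M) n B Y v}
    {χ' : RelCochain M n (F.obj B) ((sharpF F).obj Y) v'},
    IsRestriction F M χ χ' → IsML M χ' → IsML (Bimod.pullback F M) χ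
  | 0, _, _, _, _, _, _, _, _, _, _ => trivial
  | _ + 1, _, _, _, _, v', hv, _, _, hχ, ⟨hadd, hsmul, hrest⟩ => by
    refine ⟨fun Y' Z a q e x x' => ?_, fun Y' Z a q e r x => ?_, fun Y' a x => ?_⟩
    · refine eq_of_heq ((hχ Z (.cons a q) (.cons (x + x') e)).trans ?_)
      simp only [Pth.map, eltsMap, F.map_add]
      refine (heq_of_eq (hadd _ _ _ _ (eltsMap F e) _ _)).trans ?_
      exact M.add_heq (comp_base_comp_map_sharpF F hv (.cons a q))
        (hχ Z (.cons a q) (.cons x e)).symm (hχ Z (.cons a q) (.cons x' e)).symm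
    · refine eq_of_heq ((hχ Z (.cons a q) (.cons (r • x) e)).trans ?_)
      simp only [Pth.map, eltsMap, F.map_smul]
      refine (heq_of_eq (hsmul _ _ _ _ (eltsMap F e) r _)).trans ?_
      exact M.smul_heq (comp_base_comp_map_sharpF F hv (.cons a q)) r
        (hχ Z (.cons a q) (.cons x e)).symm
    · refine isML_pullback (v' := v' ≫ Sh.base ((sharpF F).map a))
        (by rw [hv, φ.map_comp]; rfl) ?_
        (hrest ((sharpF F).obj Y') ((sharpF F).map a) (F.map (Sh.base a) x))
      intro Z q e
      exact ((Bimod.pullback F M).cst_heq _ _).trans ((hχ _ _ _).trans (M.cst_heq _ _).symm)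

theorem hochD_pullback_heq {W : 𝒱} (B : 𝔟.Obj W) : ∀ {m : ℕ} {Y Z : Sh 𝔟} {v : W ⟶ Y.1}
    {v' : φ.obj W ⟶ φ.obj Y.1} (_ : v' = φ.map v)
    {χ : RelCochain (Bimod.pullback F M) m B Y v}
    {χ' : RelCochain M m (F.obj B) ((sharpF F).obj Y) v'}
    {G : ∀ (Y' Z' : Sh 𝔟) (c : Y ⟶ Y'), 𝔟.Hom (Sh.base c) Y.2 Y'.2 →
      ∀ (q : Pth (Sh 𝔟) m Y' Z'), PthElts 𝔟 q →
      (Bimod.pullback F M).M (v ≫ (Sh.base c ≫ Sh.base q.comp)) B Z'.2}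
    {G' : ∀ (Y' Z' : Sh 𝔞) (c : (sharpF F).obj Y ⟶ Y'),
      𝔞.Hom (Sh.base c) ((sharpF F).obj Y).2 Y'.2 → ∀ (q : Pth (Sh 𝔞) m Y' Z'),
      PthElts 𝔞 q → M.M (v' ≫ (Sh.base c ≫ Sh.base q.comp)) (F.obj B) Z'.2},
    IsRestriction F M χ χ' →
    (∀ Y' Z' c z q e, HEq (G Y' Z' c z q e)
      (G' ((sharpF F).obj Y') ((sharpF F).obj Z') ((sharpF F).map c)
        (F.map (Sh.base c) z) (q.map (sharpF F)) (eltsMap F e))) →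
    ∀ (p : Pth (Sh 𝔟) (m + 1) Y Z) (e : PthElts 𝔟 p),
      HEq (hochD (Bimod.pullback F M) B v χ G p e)
        (hochD M (F.obj B) v' χ' G' (p.map (sharpF F)) (eltsMap F e))
  | 0, _, _, _, _, hv, _, _, _, _, hχ, hG, .cons a (.nil _), .cons x (.nil _) => by
    refine M.sub_heq (comp_base_comp_map_sharpF F hv (.cons a (.nil _))).symm
      (hG _ _ a x _ (.nil _)) ?_
    exact ((Bimod.pullback F M).cst_heq _ _).trans <|
      (M.cst_heq (φ.map_comp _ _).symm _).trans <|
      (M.actL_congr rfl (comp_base_comp_map_sharpF F hv (.nil _)).symm HEq.rfl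
        (hχ _ _ _)).trans (M.cst_heq _ _).symm
  | _ + 1, _, _, _, v', hv, _, χ', _, _, hχ, hG, .cons a q, .cons x e => by
    refine M.sub_heq (comp_base_comp_map_sharpF F hv (.cons a q)).symm
      (hG _ _ a x q e) ?_
    refine ((Bimod.pullback F M).cst_heq _ _).trans <| HEq.trans ?_ (M.cst_heq _ _).symm
    refine hochD_pullback_heq B (v' := v' ≫ Sh.base ((sharpF F).map a))
      (by rw [hv, φ.map_comp]; rfl) ?_ ?_ q e
    · intro Z' r er
      exact ((Bimod.pullback F M).cst_heq _ _).trans <|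
        (hχ Z' (.cons a r) (.cons x er)).trans (M.cst_heq _ _).symm
    · intro Y'' Z' c z r er
      refine ((Bimod.pullback F M).cst_heq _ _).trans <|
        (hχ Z' (.cons (a ≫ c) r) (.cons (𝔟.comp z x) er)).trans ?_
      have hac := (sharpF F).map_comp a c
      exact HEq.trans (χ'.congr_heq (congrArg (Pth.cons · _) hac)
        (PthElts.cons_heq hac (F.map_comp z x) _)) (M.cst_heq _ _).symm

theorem Fstar_isCochain {n : ℕ} {c : RawCochain M n} (hc : IsCochain M c) :
    IsCochain (Bimod.pullback F M) (Fstar F M c) := fun X =>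
  isML_pullback F M (φ.map_id X.1).symm
    (fun _ _ _ => ((Bimod.pullback F M).cst_heq _ _).trans <|
      (M.cst_heq _ _).trans (M.cst_heq _ _).symm)
    (hc ((sharpF F).obj X))

theorem Fstar_add {n : ℕ} (c c' : RawCochain M n) :
    Fstar F M (c + c') = Fstar F M c + Fstar F M c' := by
  funext X Y p e
  exact M.cst_add _ _ _

theorem Fstar_smul {n : ℕ} (r : k) (c : RawCochain M n) :
    Fstar F M (r • c) = r • Fstar F M c := by
  funext X Y p e
  exact M.cst_smul _ r _

theorem Fstar_dRaw {n : ℕ} (c : RawCochain M n) :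
    Fstar F M (dRaw M c) = dRaw (Bimod.pullback F M) (Fstar F M c) := by
  funext X Z p e
  refine eq_of_heq <| (M.cst_heq _ _).trans <| (M.cst_heq _ _).trans <|
    HEq.trans ?_ ((Bimod.pullback F M).cst_heq _ _).symm
  refine (hochD_pullback_heq F M X.2 (φ.map_id X.1).symm ?_ ?_ p e).symm
  · intro Z' q e'
    exact ((Bimod.pullback F M).cst_heq _ _).trans <|
      ((M.cst_heq _ _).trans (M.cst_heq _ _).symm)
  · intro Y' Z' a z q e'
    refine ((Bimod.pullback F M).cst_heq _ _).trans <|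
      ((M.cst_heq (φ.map_comp _ _).symm _).trans ?_)
    exact (M.actR_congr (base_comp_map_sharpF F q).symm rfl (M.cst_heq _ _) HEq.rfl).trans
      (M.cst_heq _ _).symm

end Pullback

/-- Let `(φ, F) : (𝒱, 𝔟) → (𝒰, 𝔞)` be a graded functor and `M` an `𝔞`-bimodule.  The
maps `(F*_M)ⁿ : Cⁿ_𝒰(𝔞, M) → Cⁿ_𝒱(𝔟, F*M)`, `ψ ↦ (ψ_{(φ v, F B)} ∘ F^{⊗n})`, are
well defined (they take multilinear Hochschild cochains to multilinear Hochschild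
cochains), are `k`-linear, and commute with the Hochschild differentials; hence they
define a morphism of complexes `F*_M : C_𝒰(𝔞, M) → C_𝒱(𝔟, F*M)`. -/
theorem statement11 {k : Type u} [CommRing k] {𝒱 𝒰 : Type u} [Category.{u} 𝒱]
    [Category.{u} 𝒰] {φ : 𝒱 ⥤ 𝒰} {𝔟 : GradedCat k 𝒱} {𝔞 : GradedCat k 𝒰}
    (F : GradedFunctor k φ 𝔟 𝔞) (M : Bimod k 𝔞) (n : ℕ) :
    (∀ c : RawCochain M n, IsCochain M c →
      IsCochain (Bimod.pullback F M) (Fstar F M c)) ∧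
    (∀ c c' : RawCochain M n, Fstar F M (c + c') = Fstar F M c + Fstar F M c') ∧
    (∀ (r : k) (c : RawCochain M n), Fstar F M (r • c) = r • Fstar F M c) ∧
    (∀ c : RawCochain M n,
      Fstar F M (dRaw M c) = dRaw (Bimod.pullback F M) (Fstar F M c)) :=
  ⟨fun _ => Fstar_isCochain F M, Fstar_add F M, Fstar_smul F M, Fstar_dRaw F M⟩

end MapGr
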